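/- Let U be an open set of the bicomplex numbers 𝕋 and let f : U → 𝕋 be of class C¹, written as f(z₁ + z₂i₂) = f₁(z₁, z₂) + f₂(z₁, z₂)i₂ with f₁, f₂ valued in ℂ(i₁). Then f is 𝕋-holomorphic on U if and only if f₁ and f₂ are holomorphic in z₁ and in z₂ (i.e. ∂f_k/∂z̄₁ = ∂f_k/∂z̄₂ = 0 for k = 1,2) and the complexified Cauchy–Riemann equations ∂f₁/∂z₁ = ∂f₂/∂z₂ and ∂f₂/∂z₁ = −∂f₁/∂z₂ hold on U. Moreover in that case f′ = ∂f₁/∂z₁ + (∂f₂/∂z₁)i₂, and f′(w) is invertible in 𝕋 if and only if the Jacobian determinant det J_f(w) is nonzero. -/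

import Mathlib

noncomputable section

open Complex Filter Topology

/-- The bicomplex numbers `𝕋 = {z₁ + z₂ i₂ : z₁, z₂ ∈ ℂ(i₁)}`, represented by the pair
of `ℂ(i₁)`-components `(z₁, z₂)`. -/
@[ext] structure Bicomplex : Type where
  z1 : ℂ
  z2 : ℂ

namespace Bicomplex

instance : Zero Bicomplex := ⟨⟨0, 0⟩⟩
instance : One Bicomplex := ⟨⟨1, 0⟩⟩
instance : Add Bicomplex := ⟨fun w v => ⟨w.z1 + v.z1, w.z2 + v.z2⟩⟩
instance : Neg Bicomplex := ⟨fun w => ⟨-w.z1, -w.z2⟩⟩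
instance : Mul Bicomplex := ⟨fun w v => ⟨w.z1 * v.z1 - w.z2 * v.z2, w.z1 * v.z2 + w.z2 * v.z1⟩⟩

@[simp] lemma zero_z1 : (0 : Bicomplex).z1 = 0 := rfl
@[simp] lemma zero_z2 : (0 : Bicomplex).z2 = 0 := rfl
@[simp] lemma one_z1 : (1 : Bicomplex).z1 = 1 := rfl
@[simp] lemma one_z2 : (1 : Bicomplex).z2 = 0 := rfl
@[simp] lemma add_z1 (w v : Bicomplex) : (w + v).z1 = w.z1 + v.z1 := rfl
@[simp] lemma add_z2 (w v : Bicomplex) : (w + v).z2 = w.z2 + v.z2 := rfl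
@[simp] lemma neg_z1 (w : Bicomplex) : (-w).z1 = -w.z1 := rfl
@[simp] lemma neg_z2 (w : Bicomplex) : (-w).z2 = -w.z2 := rfl
@[simp] lemma mul_z1 (w v : Bicomplex) : (w * v).z1 = w.z1 * v.z1 - w.z2 * v.z2 := rfl
@[simp] lemma mul_z2 (w v : Bicomplex) : (w * v).z2 = w.z1 * v.z2 + w.z2 * v.z1 := rfl

/-- The bicomplex numbers form a commutative ring. -/
instance : CommRing Bicomplex where
  nsmul n w := ⟨n • w.z1, n • w.z2⟩
  zsmul n w := ⟨n • w.z1, n • w.z2⟩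
  nsmul_zero a := by ext <;> exact zero_nsmul _
  nsmul_succ n a := by ext <;> exact succ_nsmul _ _
  zsmul_zero' a := by ext <;> exact zero_zsmul _
  zsmul_succ' n a := by ext <;> exact SubNegMonoid.zsmul_succ' _ _
  zsmul_neg' n a := by ext <;> exact SubNegMonoid.zsmul_neg' _ _
  add_assoc a b c := by ext <;> simp <;> ring
  zero_add a := by ext <;> simp
  add_zero a := by ext <;> simp
  add_comm a b := by ext <;> simp <;> ring
  neg_add_cancel a := by ext <;> simp
  mul_assoc a b c := by ext <;> simp <;> ring
  one_mul a := by ext <;> simp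
  mul_one a := by ext <;> simp
  left_distrib a b c := by ext <;> simp <;> ring
  right_distrib a b c := by ext <;> simp <;> ring
  zero_mul a := by ext <;> simp
  mul_zero a := by ext <;> simp
  mul_comm a b := by ext <;> simp <;> ring

/-- Inverse: `w⁻¹ = w†₂ / (z₁² + z₂²)` (junk value `0/0` on the null-cone). -/
instance : Inv Bicomplex :=
  ⟨fun w => ⟨w.z1 / (w.z1 ^ 2 + w.z2 ^ 2), -w.z2 / (w.z1 ^ 2 + w.z2 ^ 2)⟩⟩

instance : Div Bicomplex := ⟨fun w v => w * v⁻¹⟩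

/-- Embedding of `ℂ(i₁)` into `𝕋`. -/
def ofComplex (c : ℂ) : Bicomplex := ⟨c, 0⟩

/-- Embedding of `ℝ` into `𝕋`. -/
def ofReal (t : ℝ) : Bicomplex := ⟨(t : ℂ), 0⟩

/-- The imaginary unit `i₁`. -/
def i1 : Bicomplex := ⟨Complex.I, 0⟩

/-- The imaginary unit `i₂`. -/
def i2 : Bicomplex := ⟨0, 1⟩

/-- The hyperbolic unit `j = i₁ i₂`. -/
def jj : Bicomplex := ⟨0, Complex.I⟩

/-- The idempotent `e₁ = (1 + j)/2`. -/
def e1 : Bicomplex := ⟨1 / 2, Complex.I / 2⟩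

/-- The idempotent `e₂ = (1 - j)/2`. -/
def e2 : Bicomplex := ⟨1 / 2, -(Complex.I) / 2⟩

/-- The projection `P₁(z₁ + z₂ i₂) = z₁ - z₂ i₁`. -/
def P1 (w : Bicomplex) : ℂ := w.z1 - w.z2 * Complex.I

/-- The projection `P₂(z₁ + z₂ i₂) = z₁ + z₂ i₁`. -/
def P2 (w : Bicomplex) : ℂ := w.z1 + w.z2 * Complex.I

/-- The conjugation `w†₁ = z̄₁ + z̄₂ i₂`. -/
def dag1 (w : Bicomplex) : Bicomplex := ⟨(starRingEnd ℂ) w.z1, (starRingEnd ℂ) w.z2⟩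

/-- The conjugation `w†₂ = z₁ - z₂ i₂`. -/
def dag2 (w : Bicomplex) : Bicomplex := ⟨w.z1, -w.z2⟩

/-- The conjugation `w†₃ = z̄₁ - z̄₂ i₂`. -/
def dag3 (w : Bicomplex) : Bicomplex := ⟨(starRingEnd ℂ) w.z1, -((starRingEnd ℂ) w.z2)⟩

/-- `𝕋` as `ℂ × ℂ`. -/
def toProd (w : Bicomplex) : ℂ × ℂ := (w.z1, w.z2)

/-- `ℂ × ℂ` as `𝕋`. -/
def ofProd (p : ℂ × ℂ) : Bicomplex := ⟨p.1, p.2⟩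

instance : TopologicalSpace Bicomplex := TopologicalSpace.induced toProd inferInstance

/-- The set of points `w` such that `w - w₀` is invertible (i.e. not a zero divisor). -/
def invertibleDiff (w₀ : Bicomplex) : Set Bicomplex :=
  {w | (w - w₀).z1 ^ 2 + (w - w₀).z2 ^ 2 ≠ 0}

/-- `f` is `𝕋`-differentiable at `w₀` with derivative `d`:
`(f w - f w₀)/(w - w₀) → d` as `w → w₀` with `w - w₀` invertible. -/
def HasTDerivAt (f : Bicomplex → Bicomplex) (d w₀ : Bicomplex) : Prop :=
  Tendsto (fun w => (f w - f w₀) / (w - w₀)) (𝓝[invertibleDiff w₀] w₀) (𝓝 d)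

/-- `f` is `𝕋`-holomorphic on `U` if it is `𝕋`-differentiable at each point of `U`. -/
def THolomorphicOn (f : Bicomplex → Bicomplex) (U : Set Bicomplex) : Prop :=
  ∀ w ∈ U, ∃ d, HasTDerivAt f d w

/-- `f` viewed as a map `ℂ² → ℂ²`. -/
def fProd (f : Bicomplex → Bicomplex) : ℂ × ℂ → ℂ × ℂ := fun p => toProd (f (ofProd p))

/-- `f : 𝕋 → 𝕋` is `n` times continuously (real-)differentiable on `U`. -/
def TContDiffOn (n : ℕ∞) (f : Bicomplex → Bicomplex) (U : Set Bicomplex) : Prop :=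
  ContDiffOn ℝ n (fProd f) (toProd '' U)

/-- `g : 𝕋 → ℂ` is `n` times continuously (real-)differentiable on `U`. -/
def CContDiffOn (n : ℕ∞) (g : Bicomplex → ℂ) (U : Set Bicomplex) : Prop :=
  ContDiffOn ℝ n (fun p => g (ofProd p)) (toProd '' U)

/-- Real partial derivative of `g : 𝕋 → ℂ` at `w` in direction `e`. -/
def pd (e : Bicomplex) (g : Bicomplex → ℂ) (w : Bicomplex) : ℂ :=
  deriv (fun t : ℝ => g (w + ofReal t * e)) 0

/-- Existence of the real partial derivative of `g : 𝕋 → ℂ` at `w` in direction `e`. -/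
def pdExists (e : Bicomplex) (g : Bicomplex → ℂ) (w : Bicomplex) : Prop :=
  DifferentiableAt ℝ (fun t : ℝ => g (w + ofReal t * e)) 0

/-- The scalar (`ℂ(i₁)`-) component `f₁` of `f = f₁ + f₂ i₂`. -/
def s1 (f : Bicomplex → Bicomplex) : Bicomplex → ℂ := fun w => (f w).z1

/-- The vectorial (`ℂ(i₁)`-) component `f₂` of `f = f₁ + f₂ i₂`. -/
def s2 (f : Bicomplex → Bicomplex) : Bicomplex → ℂ := fun w => (f w).z2

/-- Real partial derivative of `f : 𝕋 → 𝕋` in direction `e`. -/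
def pdT (e : Bicomplex) (f : Bicomplex → Bicomplex) : Bicomplex → Bicomplex :=
  fun w => ⟨pd e (s1 f) w, pd e (s2 f) w⟩

/-- Existence of the real partial derivative of `f : 𝕋 → 𝕋` in direction `e`. -/
def pdTExists (e : Bicomplex) (f : Bicomplex → Bicomplex) (w : Bicomplex) : Prop :=
  pdExists e (s1 f) w ∧ pdExists e (s2 f) w

/-- `∂_{z₁} g = ½(∂ₓ g - i₁ ∂_y g)` for `g : 𝕋 → ℂ`. -/
def dz1 (g : Bicomplex → ℂ) : Bicomplex → ℂ :=
  fun w => (pd 1 g w - Complex.I * pd i1 g w) / 2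

/-- `∂_{z̄₁} g = ½(∂ₓ g + i₁ ∂_y g)` for `g : 𝕋 → ℂ`. -/
def dz1bar (g : Bicomplex → ℂ) : Bicomplex → ℂ :=
  fun w => (pd 1 g w + Complex.I * pd i1 g w) / 2

/-- `∂_{z₂} g = ½(∂_p g - i₁ ∂_q g)` for `g : 𝕋 → ℂ`. -/
def dz2 (g : Bicomplex → ℂ) : Bicomplex → ℂ :=
  fun w => (pd i2 g w - Complex.I * pd jj g w) / 2

/-- `∂_{z̄₂} g = ½(∂_p g + i₁ ∂_q g)` for `g : 𝕋 → ℂ`. -/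
def dz2bar (g : Bicomplex → ℂ) : Bicomplex → ℂ :=
  fun w => (pd i2 g w + Complex.I * pd jj g w) / 2

/-- `∂_{z₁}` applied componentwise to `f : 𝕋 → 𝕋`. -/
def dZ1 (f : Bicomplex → Bicomplex) : Bicomplex → Bicomplex :=
  fun w => ⟨dz1 (s1 f) w, dz1 (s2 f) w⟩

/-- `∂_{z₂}` applied componentwise to `f : 𝕋 → 𝕋`. -/
def dZ2 (f : Bicomplex → Bicomplex) : Bicomplex → Bicomplex :=
  fun w => ⟨dz2 (s1 f) w, dz2 (s2 f) w⟩

/-- `∂_{z̄₁}` applied componentwise to `f : 𝕋 → 𝕋`. -/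
def dZ1bar (f : Bicomplex → Bicomplex) : Bicomplex → Bicomplex :=
  fun w => ⟨dz1bar (s1 f) w, dz1bar (s2 f) w⟩

/-- `∂_{z̄₂}` applied componentwise to `f : 𝕋 → 𝕋`. -/
def dZ2bar (f : Bicomplex → Bicomplex) : Bicomplex → Bicomplex :=
  fun w => ⟨dz2bar (s1 f) w, dz2bar (s2 f) w⟩

/-- `∂_ω = ½(∂_{z₁} - i₂ ∂_{z₂})`. -/
def dOm (f : Bicomplex → Bicomplex) : Bicomplex → Bicomplex :=
  fun w => ofComplex (1 / 2) * (dZ1 f w - i2 * dZ2 f w)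

/-- `∂_{ω†₂} = ∂_ω̄ = ½(∂_{z₁} + i₂ ∂_{z₂})`. -/
def dOmBar (f : Bicomplex → Bicomplex) : Bicomplex → Bicomplex :=
  fun w => ofComplex (1 / 2) * (dZ1 f w + i2 * dZ2 f w)

/-- `∂_{ω†₁} = ½(∂_{z̄₁} - i₂ ∂_{z̄₂})`. -/
def dOmDag1 (f : Bicomplex → Bicomplex) : Bicomplex → Bicomplex :=
  fun w => ofComplex (1 / 2) * (dZ1bar f w - i2 * dZ2bar f w)

/-- `∂_{ω†₃} = ½(∂_{z̄₁} + i₂ ∂_{z̄₂})`. -/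
def dOmDag3 (f : Bicomplex → Bicomplex) : Bicomplex → Bicomplex :=
  fun w => ofComplex (1 / 2) * (dZ1bar f w + i2 * dZ2bar f w)

/-- The complexified Laplacian `Δ_ℂ = ∂²_{z₁} + ∂²_{z₂}` acting on `ℂ(i₁)`-valued functions. -/
def lapC (g : Bicomplex → ℂ) : Bicomplex → ℂ :=
  fun w => dz1 (dz1 g) w + dz2 (dz2 g) w

/-- The vector part in the `i₂`-representation `w = ζ₁ + ζ₂ i₁` with `ζ₁, ζ₂ ∈ ℂ(i₂)`:
for `w = x₁ + x₂i₁ + x₃i₂ + x₄j`, `Vec(w) = x₂ + x₄ i₂`, encoded as the complex number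
`x₂ + x₄ i`. -/
def vec2 (w : Bicomplex) : ℂ := ⟨w.z1.im, w.z2.im⟩

/-- Embedding of `ℂ(i₂)` into `𝕋`: the complex number `a + b i` represents `a + b i₂`. -/
def ofC2 (c : ℂ) : Bicomplex := ⟨(c.re : ℂ), (c.im : ℂ)⟩

/-- Multiplication of hyperbolic numbers `ℂ(j) = {x + yj}`, encoded as pairs in `ℝ × ℝ`. -/
def hmul (a b : ℝ × ℝ) : ℝ × ℝ := (a.1 * b.1 + a.2 * b.2, a.1 * b.2 + a.2 * b.1)

/-- Division of hyperbolic numbers (junk value when the denominator is a zero divisor). -/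
def hdiv (a b : ℝ × ℝ) : ℝ × ℝ :=
  hmul a (b.1 / (b.1 ^ 2 - b.2 ^ 2), -b.2 / (b.1 ^ 2 - b.2 ^ 2))

/-- Embedding of the hyperbolic numbers `ℂ(j)` into `𝕋`: `(x, y) ↦ x + y j`. -/
def ofHyp (a : ℝ × ℝ) : Bicomplex := ⟨(a.1 : ℂ), (a.2 : ℂ) * Complex.I⟩

/-- The vector part in the `j`-representation `w = ζ₁ + ζ₂ i₁` with `ζ₁, ζ₂ ∈ ℂ(j)`:
for `w = x₁ + x₂i₁ + x₃i₂ + x₄j`, `Vec(w) = x₂ - x₃ j`, encoded as the pair `(x₂, -x₃)`. -/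
def vec3 (w : Bicomplex) : ℝ × ℝ := (w.z1.im, -w.z2.re)

/-- The `𝕋`-cartesian set `X₁ ×ₑ X₂ = {w : P₁ w ∈ X₁ ∧ P₂ w ∈ X₂}`. -/
def eProd (X₁ X₂ : Set ℂ) : Set Bicomplex := {w | P1 w ∈ X₁ ∧ P2 w ∈ X₂}

/-- `(F, G)` is an `i₁`-generating pair on `D`. -/
def GenPair1 (F G : Bicomplex → Bicomplex) (D : Set Bicomplex) : Prop :=
  TContDiffOn 2 F D ∧ TContDiffOn 2 G D ∧ ∀ w ∈ D, (dag2 (F w) * G w).z2 ≠ 0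

/-- `(F, G)` is an `i₂`-generating pair on `D`. -/
def GenPair2 (F G : Bicomplex → Bicomplex) (D : Set Bicomplex) : Prop :=
  TContDiffOn 2 F D ∧ TContDiffOn 2 G D ∧ ∀ w ∈ D, vec2 (dag1 (F w) * G w) ≠ 0

/-- `(F, G)` is a `j`-generating pair on `D`. -/
def GenPairJ (F G : Bicomplex → Bicomplex) (D : Set Bicomplex) : Prop :=
  TContDiffOn 2 F D ∧ TContDiffOn 2 G D ∧ ∀ w ∈ D, vec3 (dag3 (F w) * G w) ≠ 0

/-- The unique `λ₀ ∈ ℂ(i₁)` with `w(ω₀) = λ₀ F(ω₀) + μ₀ G(ω₀)`. -/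
def lam1 (F G wf : Bicomplex → Bicomplex) (ω₀ : Bicomplex) : ℂ :=
  (dag2 (wf ω₀) * G ω₀).z2 / (dag2 (F ω₀) * G ω₀).z2

/-- The unique `μ₀ ∈ ℂ(i₁)` with `w(ω₀) = λ₀ F(ω₀) + μ₀ G(ω₀)`. -/
def mu1 (F G wf : Bicomplex → Bicomplex) (ω₀ : Bicomplex) : ℂ :=
  -((dag2 (wf ω₀) * F ω₀).z2 / (dag2 (F ω₀) * G ω₀).z2)

/-- `w` has `(F,G)_{i₁}`-derivative `d` at `ω₀`. -/
def HasFGDeriv1 (F G wf : Bicomplex → Bicomplex) (d ω₀ : Bicomplex) : Prop :=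
  Tendsto
    (fun ω => (wf ω - ofComplex (lam1 F G wf ω₀) * F ω - ofComplex (mu1 F G wf ω₀) * G ω)
        / (ω - ω₀))
    (𝓝[invertibleDiff ω₀] ω₀) (𝓝 d)

/-- The unique `λ₀ ∈ ℂ(j)` with `w(ω₀) = λ₀ F(ω₀) + μ₀ G(ω₀)`. -/
def lamJ (F G wf : Bicomplex → Bicomplex) (ω₀ : Bicomplex) : ℝ × ℝ :=
  hdiv (vec3 (dag3 (wf ω₀) * G ω₀)) (vec3 (dag3 (F ω₀) * G ω₀))

/-- The unique `μ₀ ∈ ℂ(j)` with `w(ω₀) = λ₀ F(ω₀) + μ₀ G(ω₀)`. -/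
def muJ (F G wf : Bicomplex → Bicomplex) (ω₀ : Bicomplex) : ℝ × ℝ :=
  -(hdiv (vec3 (dag3 (wf ω₀) * F ω₀)) (vec3 (dag3 (F ω₀) * G ω₀)))

/-- `w` has `(F,G)_j`-derivative `d` at `ω₀`. -/
def HasFGDerivJ (F G wf : Bicomplex → Bicomplex) (d ω₀ : Bicomplex) : Prop :=
  Tendsto
    (fun ω => (wf ω - ofHyp (lamJ F G wf ω₀) * F ω - ofHyp (muJ F G wf ω₀) * G ω) / (ω - ω₀))
    (𝓝[invertibleDiff ω₀] ω₀) (𝓝 d)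

/-- `w` is `(F,G)_j`-pseudoanalytic on `D`. -/
def PseudoanalyticJ (F G wf : Bicomplex → Bicomplex) (D : Set Bicomplex) : Prop :=
  ∀ ω ∈ D, ∃ d, HasFGDerivJ F G wf d ω

/-- `w` has continuous partial derivatives in a neighborhood of `ω₀`. -/
def HasContPartialsNear (f : Bicomplex → Bicomplex) (w₀ : Bicomplex) : Prop :=
  ∃ V ∈ 𝓝 w₀, ∀ e ∈ ({1, i1, i2, jj} : Set Bicomplex),
    (∀ w ∈ V, pdTExists e f w) ∧ ContinuousOn (pdT e f) V

/-! Characteristic coefficients with respect to the `†₂` conjugation (`i₁` case). -/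

def denom2 (F G : Bicomplex → Bicomplex) (w : Bicomplex) : Bicomplex :=
  F w * dag2 (G w) - dag2 (F w) * G w

def aCoef2₁ (F G : Bicomplex → Bicomplex) (w : Bicomplex) : Bicomplex :=
  -((dag1 (F w) * dOmDag1 G w - dOmDag1 F w * dag1 (G w)) / denom2 F G w)

def bCoef2₁ (F G : Bicomplex → Bicomplex) (w : Bicomplex) : Bicomplex :=
  (F w * dOmDag1 G w - dOmDag1 F w * G w) / denom2 F G w

def aCoef2₂ (F G : Bicomplex → Bicomplex) (w : Bicomplex) : Bicomplex :=
  -((dag2 (F w) * dOmBar G w - dOmBar F w * dag2 (G w)) / denom2 F G w)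

def bCoef2₂ (F G : Bicomplex → Bicomplex) (w : Bicomplex) : Bicomplex :=
  (F w * dOmBar G w - dOmBar F w * G w) / denom2 F G w

def aCoef2₃ (F G : Bicomplex → Bicomplex) (w : Bicomplex) : Bicomplex :=
  -((dag3 (F w) * dOmDag3 G w - dOmDag3 F w * dag3 (G w)) / denom2 F G w)

def bCoef2₃ (F G : Bicomplex → Bicomplex) (w : Bicomplex) : Bicomplex :=
  (F w * dOmDag3 G w - dOmDag3 F w * G w) / denom2 F G w

def Acoef2 (F G : Bicomplex → Bicomplex) (w : Bicomplex) : Bicomplex :=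
  -((dag2 (F w) * dOm G w - dOm F w * dag2 (G w)) / denom2 F G w)

def Bcoef2 (F G : Bicomplex → Bicomplex) (w : Bicomplex) : Bicomplex :=
  (F w * dOm G w - dOm F w * G w) / denom2 F G w

/-! Characteristic coefficients with respect to the `†₃` conjugation (`j` case). -/

def denom3 (F G : Bicomplex → Bicomplex) (w : Bicomplex) : Bicomplex :=
  F w * dag3 (G w) - dag3 (F w) * G w

def aCoef3₁ (F G : Bicomplex → Bicomplex) (w : Bicomplex) : Bicomplex :=
  -((dag1 (F w) * dOmDag1 G w - dOmDag1 F w * dag1 (G w)) / denom3 F G w)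

def bCoef3₁ (F G : Bicomplex → Bicomplex) (w : Bicomplex) : Bicomplex :=
  (F w * dOmDag1 G w - dOmDag1 F w * G w) / denom3 F G w

def aCoef3₂ (F G : Bicomplex → Bicomplex) (w : Bicomplex) : Bicomplex :=
  -((dag2 (F w) * dOmBar G w - dOmBar F w * dag2 (G w)) / denom3 F G w)

def bCoef3₂ (F G : Bicomplex → Bicomplex) (w : Bicomplex) : Bicomplex :=
  (F w * dOmBar G w - dOmBar F w * G w) / denom3 F G w

def aCoef3₃ (F G : Bicomplex → Bicomplex) (w : Bicomplex) : Bicomplex :=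
  -((dag3 (F w) * dOmDag3 G w - dOmDag3 F w * dag3 (G w)) / denom3 F G w)

def bCoef3₃ (F G : Bicomplex → Bicomplex) (w : Bicomplex) : Bicomplex :=
  (F w * dOmDag3 G w - dOmDag3 F w * G w) / denom3 F G w

def Acoef3 (F G : Bicomplex → Bicomplex) (w : Bicomplex) : Bicomplex :=
  -((dag3 (F w) * dOm G w - dOm F w * dag3 (G w)) / denom3 F G w)

def Bcoef3 (F G : Bicomplex → Bicomplex) (w : Bicomplex) : Bicomplex :=
  (F w * dOm G w - dOm F w * G w) / denom3 F G w

/-! Classical (Bers) pseudoanalytic function theory in `ℂ(i₁)`. -/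

/-- A complex (in `i₁`) generating pair on `D ⊆ ℂ(i₁)`. -/
def ComplexGenPair (Fe Ge : ℂ → ℂ) (D : Set ℂ) : Prop :=
  ContDiffOn ℝ 2 Fe D ∧ ContDiffOn ℝ 2 Ge D ∧
    ∀ z ∈ D, ((starRingEnd ℂ) (Fe z) * Ge z).im ≠ 0

/-- The unique real `λ₀` with `w(z₀) = λ₀ F(z₀) + μ₀ G(z₀)`. -/
def lamBers (Fe Ge we : ℂ → ℂ) (z₀ : ℂ) : ℝ :=
  ((starRingEnd ℂ) (we z₀) * Ge z₀).im / ((starRingEnd ℂ) (Fe z₀) * Ge z₀).im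

/-- The unique real `μ₀` with `w(z₀) = λ₀ F(z₀) + μ₀ G(z₀)`. -/
def muBers (Fe Ge we : ℂ → ℂ) (z₀ : ℂ) : ℝ :=
  -(((starRingEnd ℂ) (we z₀) * Fe z₀).im / ((starRingEnd ℂ) (Fe z₀) * Ge z₀).im)

/-- `w_e` has Bers `(F_e,G_e)`-derivative `d` at `z₀`. -/
def HasBersDerivAt (Fe Ge we : ℂ → ℂ) (d z₀ : ℂ) : Prop :=
  Tendsto
    (fun z => (we z - (lamBers Fe Ge we z₀ : ℂ) * Fe z - (muBers Fe Ge we z₀ : ℂ) * Ge z)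
        / (z - z₀))
    (𝓝[≠] z₀) (𝓝 d)

/-- `w_e` is `(F_e,G_e)`-pseudoanalytic (in the sense of Bers) on `D`. -/
def BersPseudoanalyticOn (Fe Ge we : ℂ → ℂ) (D : Set ℂ) : Prop :=
  ∀ z ∈ D, ∃ d, HasBersDerivAt Fe Ge we d z

/-- `∂_z̄ = ½(∂ₓ + i ∂_y)` for functions `ℂ(i₁) → ℂ(i₁)`. -/
def dzbarC (g : ℂ → ℂ) (z : ℂ) : ℂ :=
  (deriv (fun t : ℝ => g (z + t)) 0 + Complex.I * deriv (fun t : ℝ => g (z + t * Complex.I)) 0) / 2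

/-- The Bers characteristic coefficient `a_{(F_e,G_e)}`. -/
def aBers (Fe Ge : ℂ → ℂ) (z : ℂ) : ℂ :=
  -(((starRingEnd ℂ) (Fe z) * dzbarC Ge z - dzbarC Fe z * (starRingEnd ℂ) (Ge z)) /
    (Fe z * (starRingEnd ℂ) (Ge z) - (starRingEnd ℂ) (Fe z) * Ge z))

/-- The Bers characteristic coefficient `b_{(F_e,G_e)}`. -/
def bBers (Fe Ge : ℂ → ℂ) (z : ℂ) : ℂ :=
  (Fe z * dzbarC Ge z - dzbarC Fe z * Ge z) /
    (Fe z * (starRingEnd ℂ) (Ge z) - (starRingEnd ℂ) (Fe z) * Ge z)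

/-- `(F, G)` is the `i₂e`-generating pair associated to complex generating pairs
`(F_{e1}, G_{e1})` on `D₁` and `(F_{e2}, G_{e2})` on `D₂`. -/
def I2eGenPair (Fe1 Ge1 Fe2 Ge2 : ℂ → ℂ) (D₁ D₂ : Set ℂ)
    (F G : Bicomplex → Bicomplex) : Prop :=
  ComplexGenPair Fe1 Ge1 D₁ ∧ ComplexGenPair Fe2 Ge2 D₂ ∧
  (∀ w, F w = ofComplex (Fe1 (P1 w)) * e1 + ofComplex (Fe2 (P2 w)) * e2) ∧
  (∀ w, G w = ofComplex (Ge1 (P1 w)) * e1 + ofComplex (Ge2 (P2 w)) * e2)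


/-!
If `f` is `𝕋`-differentiable at `w` with derivative `d`, letting the increment tend to `0` along
the real lines `t e` for the invertible directions `e = 1, i₁, i₂, j` shows that the real
derivative of `f` at `w` is multiplication by `d`. A real-linear map is multiplication by `d`
exactly when its values at `1, i₁, i₂, j`, here the real partial derivatives of `f`, satisfy the
complexified Cauchy–Riemann equations and `∂f/∂z₁ = d`.

Conversely, the equations make the real derivative multiplication by `∂f/∂z₁` at every point of
`U`, but near the null cone of `w - w₀` this does not control the difference quotient. In the
idempotent coordinates `(P₁, P₂)`, which identify `𝕋` with the product ring `ℂ × ℂ`, that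
multiplication is diagonal, so `P₁ ∘ f` has no derivative in the `P₂` direction and is locally a
holomorphic function of `P₁` alone, and symmetrically for `P₂ ∘ f`. The `𝕋`-difference quotient
then splits into two ordinary complex difference quotients, both of which converge.
-/

@[simp] lemma toProd_ofProd (p : ℂ × ℂ) : toProd (ofProd p) = p := rfl
@[simp] lemma ofProd_toProd (w : Bicomplex) : ofProd (toProd w) = w := rfl

lemma ofProd_eq_iff {p : ℂ × ℂ} {w : Bicomplex} : ofProd p = w ↔ p = toProd w :=
  ⟨fun h => h ▸ rfl, fun h => h ▸ rfl⟩

lemma toProd_sub (x y : Bicomplex) : toProd (x - y) = toProd x - toProd y := rfl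

lemma toProd_ofReal_mul (t : ℝ) (x : Bicomplex) : toProd (ofReal t * x) = t • toProd x := by
  simp [toProd, ofReal, Complex.real_smul]

lemma ofProd_smul (t : ℝ) (p : ℂ × ℂ) : ofProd (t • p) = ofReal t * ofProd p := by
  ext <;> simp [ofProd, ofReal, Complex.real_smul]

lemma toProd_add_ofReal_mul (w e : Bicomplex) (t : ℝ) :
    toProd (w + ofReal t * e) = toProd w + t • toProd e := by
  rw [← toProd_ofReal_mul]; rfl

lemma isInducing_toProd : Topology.IsInducing toProd := ⟨rfl⟩

@[simp] lemma ofReal_zero : ofReal 0 = 0 := by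
  ext <;> simp [ofReal]

def idem : Bicomplex ≃+* ℂ × ℂ where
  toFun w := (P1 w, P2 w)
  invFun q := ⟨(q.1 + q.2) / 2, Complex.I * (q.1 - q.2) / 2⟩
  left_inv w := by
    ext
    · simp only [P1, P2]; ring
    · simp only [P1, P2]; linear_combination (-w.z2) * Complex.I_sq
  right_inv q := by
    ext
    · simp only [P1]; linear_combination (-(q.1 - q.2) / 2) * Complex.I_sq
    · simp only [P2]; linear_combination ((q.1 - q.2) / 2) * Complex.I_sq
  map_mul' x y := by
    ext
    · simp only [P1, mul_z1, mul_z2, Prod.fst_mul]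
      linear_combination (-(x.z2 * y.z2)) * Complex.I_sq
    · simp only [P2, mul_z1, mul_z2, Prod.snd_mul]
      linear_combination (-(x.z2 * y.z2)) * Complex.I_sq
  map_add' x y := by
    ext
    · simp only [P1, add_z1, add_z2, Prod.fst_add]; ring
    · simp only [P2, add_z1, add_z2, Prod.snd_add]; ring

@[simp] lemma idem_fst (w : Bicomplex) : (idem w).1 = P1 w := rfl
@[simp] lemma idem_snd (w : Bicomplex) : (idem w).2 = P2 w := rfl

@[simp] lemma P1_sub (x y : Bicomplex) : P1 (x - y) = P1 x - P1 y :=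
  congrArg Prod.fst (map_sub idem x y)
@[simp] lemma P2_sub (x y : Bicomplex) : P2 (x - y) = P2 x - P2 y :=
  congrArg Prod.snd (map_sub idem x y)

lemma P1_mul_P2 (w : Bicomplex) : P1 w * P2 w = w.z1 ^ 2 + w.z2 ^ 2 := by
  simp only [P1, P2]; linear_combination (-w.z2 ^ 2) * Complex.I_sq

lemma isUnit_iff_P1_ne_zero_and_P2_ne_zero {w : Bicomplex} :
    IsUnit w ↔ P1 w ≠ 0 ∧ P2 w ≠ 0 := by
  rw [← MulEquiv.isUnit_map idem, Prod.isUnit_iff, isUnit_iff_ne_zero, isUnit_iff_ne_zero]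
  rfl

lemma isUnit_iff_sq_add_sq_ne_zero {w : Bicomplex} : IsUnit w ↔ w.z1 ^ 2 + w.z2 ^ 2 ≠ 0 := by
  rw [isUnit_iff_P1_ne_zero_and_P2_ne_zero, ← P1_mul_P2, mul_ne_zero_iff]

lemma mem_invertibleDiff_iff {w w₀ : Bicomplex} : w ∈ invertibleDiff w₀ ↔ IsUnit (w - w₀) :=
  isUnit_iff_sq_add_sq_ne_zero.symm

lemma isUnit_ofReal {t : ℝ} (ht : t ≠ 0) : IsUnit (ofReal t) :=
  isUnit_iff_sq_add_sq_ne_zero.2 (by simp [ofReal, ht])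

lemma mul_inv_cancel_of_isUnit {w : Bicomplex} (hw : IsUnit w) : w * w⁻¹ = 1 := by
  rw [isUnit_iff_sq_add_sq_ne_zero] at hw
  ext
  · change w.z1 * (w.z1 / _) - w.z2 * (-w.z2 / _) = 1
    field_simp
    ring
  · change w.z1 * (-w.z2 / _) + w.z2 * (w.z1 / _) = 0
    ring

lemma mul_div_cancel_of_isUnit (x : Bicomplex) {y : Bicomplex} (hy : IsUnit y) :
    y * (x / y) = x := by
  change y * (x * y⁻¹) = x
  rw [mul_left_comm, mul_inv_cancel_of_isUnit hy, mul_one]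

lemma idem_div (x : Bicomplex) {y : Bicomplex} (hy : IsUnit y) :
    idem (x / y) = idem x / idem y := by
  have hinv : idem y⁻¹ = (idem y)⁻¹ :=
    eq_inv_of_mul_eq_one_right (by rw [← map_mul, mul_inv_cancel_of_isUnit hy, map_one])
  change idem (x * y⁻¹) = _
  rw [map_mul, hinv, div_eq_mul_inv]

def mulCLM (d : Bicomplex) : (ℂ × ℂ) →L[ℝ] ℂ × ℂ :=
  LinearMap.toContinuousLinearMap
    { toFun := fun p => toProd (d * ofProd p)
      map_add' := fun p q => congrArg toProd (mul_add d (ofProd p) (ofProd q))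
      map_smul' := fun c p => by
        rw [RingHom.id_apply, ofProd_smul, mul_left_comm, toProd_ofReal_mul] }

@[simp] lemma mulCLM_apply (d : Bicomplex) (p : ℂ × ℂ) :
    mulCLM d p = toProd (d * ofProd p) := rfl

lemma ext_basis {F : Type*} [AddCommMonoid F] [Module ℝ F] [TopologicalSpace F]
    {L M : (ℂ × ℂ) →L[ℝ] F}
    (h : ∀ e ∈ ({1, i1, i2, jj} : Set Bicomplex), L (toProd e) = M (toProd e)) : L = M := by
  simp only [Set.mem_insert_iff, Set.mem_singleton_iff, forall_eq_or_imp, forall_eq] at h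
  obtain ⟨h1, hi1, hi2, hjj⟩ := h
  refine ContinuousLinearMap.prod_ext ?_ ?_ <;>
    refine ContinuousLinearMap.coe_injective (Complex.basisOneI.ext fun i => ?_) <;>
    fin_cases i <;> simpa

def idemCLE : (ℂ × ℂ) ≃L[ℝ] ℂ × ℂ :=
  LinearEquiv.toContinuousLinearEquiv
    { toFun := fun p => idem (ofProd p)
      invFun := fun q => toProd (idem.symm q)
      map_add' := fun p q => map_add idem (ofProd p) (ofProd q)
      map_smul' := fun c p => by
        simp only [RingHom.id_apply, Prod.ext_iff, Prod.smul_fst, Prod.smul_snd, idem_fst,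
          idem_snd, ofProd, P1, P2, Complex.real_smul]
        constructor <;> ring
      left_inv := fun p => congrArg toProd (idem.symm_apply_apply (ofProd p))
      right_inv := fun q => idem.apply_symm_apply q }

@[simp] lemma idemCLE_toProd (w : Bicomplex) : idemCLE (toProd w) = idem w := rfl
@[simp] lemma idemCLE_symm_apply (q : ℂ × ℂ) : idemCLE.symm q = toProd (idem.symm q) := rfl

lemma isInducing_idem : Topology.IsInducing (idem : Bicomplex → ℂ × ℂ) :=
  idemCLE.toHomeomorph.isInducing.comp isInducing_toProd

lemma continuous_P1 : Continuous P1 := continuous_fst.comp isInducing_idem.continuous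
lemma continuous_P2 : Continuous P2 := continuous_snd.comp isInducing_idem.continuous

lemma continuous_idem_symm : Continuous (idem.symm : ℂ × ℂ → Bicomplex) :=
  isInducing_idem.continuous_iff.2 <| by
    simpa only [Function.comp_def, RingEquiv.apply_symm_apply] using continuous_id'

end Bicomplex

section Calculus

variable {E F G : Type*} [NormedAddCommGroup E] [NormedSpace ℝ E] [NormedAddCommGroup F]
  [NormedSpace ℝ F] [NormedAddCommGroup G] [NormedSpace ℝ G]

lemma Convex.apply_add_eq_of_hasFDerivAt {s : Set E} (hs : Convex ℝ s) {g : E → G}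
    {L : E → E →L[ℝ] G} (hg : ∀ x ∈ s, HasFDerivAt g (L x) x) {x v : E}
    (hv : ∀ y ∈ s, L y v = 0) (hx : x ∈ s) (hxv : x + v ∈ s) : g (x + v) = g x := by
  have hseg : ∀ t ∈ Set.Icc (0 : ℝ) 1, x + t • v ∈ s := fun t ht => hs.add_smul_mem hx hxv ht
  have hderiv : ∀ t ∈ Set.Icc (0 : ℝ) 1,
      HasDerivWithinAt (fun t : ℝ => g (x + t • v)) 0 (Set.Icc 0 1) t := by
    intro t ht
    have hline := ((hasDerivAt_id t).smul_const v).const_add x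
    simpa [Function.comp_def, hv _ (hseg t ht)] using
      ((hg _ (hseg t ht)).comp_hasDerivAt t hline).hasDerivWithinAt
  have := (convex_Icc (0 : ℝ) 1).norm_image_sub_le_of_norm_hasDerivWithin_le hderiv
    (fun _ _ => norm_zero.le) (Set.left_mem_Icc.2 zero_le_one) (Set.right_mem_Icc.2 zero_le_one)
  simpa [sub_eq_zero] using this

lemma eventually_eq_apply_fst_of_hasFDerivAt {g : E × F → G} {L : E × F → E × F →L[ℝ] G}
    {q₀ : E × F} (hg : ∀ᶠ q in 𝓝 q₀, HasFDerivAt g (L q) q ∧ ∀ y, L q (0, y) = 0) :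
    ∀ᶠ q in 𝓝 q₀, g q = g (q.1, q₀.2) := by
  obtain ⟨ε, hε, hball⟩ := Metric.eventually_nhds_iff_ball.1 hg
  rw [Metric.eventually_nhds_iff_ball]
  refine ⟨ε, hε, fun q hq => ?_⟩
  have hmem : q + (0, q₀.2 - q.2) ∈ Metric.ball q₀ ε := by
    rw [Metric.mem_ball, Prod.dist_eq] at hq ⊢
    simpa [hε] using (max_lt_iff.1 hq).1
  have := (convex_ball q₀ ε).apply_add_eq_of_hasFDerivAt (fun y hy => (hball y hy).1)
    (fun y hy => (hball y hy).2 _) hq hmem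
  rwa [eq_comm, show q + (0, q₀.2 - q.2) = (q.1, q₀.2) from Prod.ext (add_zero _)
    (add_sub_cancel _ _)] at this

lemma eventually_eq_apply_snd_of_hasFDerivAt {g : E × F → G} {L : E × F → E × F →L[ℝ] G}
    {q₀ : E × F} (hg : ∀ᶠ q in 𝓝 q₀, HasFDerivAt g (L q) q ∧ ∀ x, L q (x, 0) = 0) :
    ∀ᶠ q in 𝓝 q₀, g q = g (q₀.1, q.2) := by
  obtain ⟨ε, hε, hball⟩ := Metric.eventually_nhds_iff_ball.1 hg
  rw [Metric.eventually_nhds_iff_ball]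
  refine ⟨ε, hε, fun q hq => ?_⟩
  have hmem : q + (q₀.1 - q.1, 0) ∈ Metric.ball q₀ ε := by
    rw [Metric.mem_ball, Prod.dist_eq] at hq ⊢
    simpa [hε] using (max_lt_iff.1 hq).2
  have := (convex_ball q₀ ε).apply_add_eq_of_hasFDerivAt (fun y hy => (hball y hy).1)
    (fun y hy => (hball y hy).2 _) hq hmem
  rwa [eq_comm, show q + (q₀.1 - q.1, 0) = (q₀.1, q.2) from Prod.ext (add_sub_cancel _ _)
    (add_zero _)] at this

lemma HasFDerivAt.hasDerivAt_comp_prodMk_left {g : ℂ × F → ℂ} {L : ℂ × F →L[ℝ] ℂ} {z : ℂ}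
    {y : F} {c : ℂ} (hg : HasFDerivAt g L (z, y)) (hL : ∀ v, L (v, 0) = c * v) :
    HasDerivAt (fun z => g (z, y)) c z := by
  refine hasDerivAt_iff_hasFDerivAt.2
    (hasFDerivAt_of_restrictScalars ℝ (hg.comp z (hasFDerivAt_prodMk_left z y)) ?_)
  ext1 v
  simp [hL, mul_comm]

lemma HasFDerivAt.hasDerivAt_comp_prodMk_right {g : E × ℂ → ℂ} {L : E × ℂ →L[ℝ] ℂ} {x : E}
    {z : ℂ} {c : ℂ} (hg : HasFDerivAt g L (x, z)) (hL : ∀ v, L (0, v) = c * v) :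
    HasDerivAt (fun z => g (x, z)) c z := by
  refine hasDerivAt_iff_hasFDerivAt.2
    (hasFDerivAt_of_restrictScalars ℝ (hg.comp z (hasFDerivAt_prodMk_right x z)) ?_)
  ext1 v
  simp [hL, mul_comm]

lemma tendsto_sub_div_sub_of_eventuallyEq_comp {X : Type*} [TopologicalSpace X] {g π : X → ℂ}
    {h : ℂ → ℂ} {c : ℂ} {x₀ : X} {l : Filter X} (hl : l ≤ 𝓝 x₀) (hπ : ContinuousAt π x₀)
    (hne : ∀ᶠ x in l, π x ≠ π x₀) (hgh : g =ᶠ[𝓝 x₀] h ∘ π) (hh : HasDerivAt h c (π x₀)) :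
    Tendsto (fun x => (g x - g x₀) / (π x - π x₀)) l (𝓝 c) := by
  have hπl : Tendsto π l (𝓝[≠] (π x₀)) :=
    tendsto_nhdsWithin_iff.2 ⟨hπ.tendsto.mono_left hl, hne⟩
  refine ((hasDerivAt_iff_tendsto_slope.1 hh).comp hπl).congr' ?_
  filter_upwards [hl hgh] with x hx
  simp [slope_def_field, hx, hgh.eq_of_nhds]

end Calculus

namespace Bicomplex

def ComplexifiedCR (f : Bicomplex → Bicomplex) (w : Bicomplex) : Prop :=
  dz1bar (s1 f) w = 0 ∧ dz2bar (s1 f) w = 0 ∧ dz1bar (s2 f) w = 0 ∧ dz2bar (s2 f) w = 0 ∧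
    dz1 (s1 f) w = dz2 (s2 f) w ∧ dz1 (s2 f) w = -dz2 (s1 f) w

section RealDerivative

variable {f : Bicomplex → Bicomplex} {w : Bicomplex} {L : (ℂ × ℂ) →L[ℝ] ℂ × ℂ}

lemma complexifiedCR_and_dZ1_eq_iff_pdT {d : Bicomplex} :
    ComplexifiedCR f w ∧ dZ1 f w = d ↔
      pdT 1 f w = d ∧ pdT i1 f w = d * i1 ∧ pdT i2 f w = d * i2 ∧ pdT jj f w = d * jj := by
  simp only [ComplexifiedCR, dZ1, dz1, dz2, dz1bar, dz2bar, pdT, Bicomplex.ext_iff, mul_z1,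
    mul_z2, i1, i2, jj]
  have hI := Complex.I_sq
  constructor
  · rintro ⟨⟨h1, h2, h3, h4, h5, h6⟩, h7, h8⟩
    refine ⟨⟨?_, ?_⟩, ⟨?_, ?_⟩, ⟨?_, ?_⟩, ⟨?_, ?_⟩⟩ <;> grind
  · rintro ⟨⟨h1, h2⟩, ⟨h3, h4⟩, ⟨h5, h6⟩, ⟨h7, h8⟩⟩
    refine ⟨⟨?_, ?_, ?_, ?_, ?_, ?_⟩, ?_, ?_⟩ <;> grind

lemma hasDerivAt_toProd_comp_line (h : HasFDerivAt (fProd f) L (toProd w)) (e : Bicomplex) :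
    HasDerivAt (fun t : ℝ => toProd (f (w + ofReal t * e))) (L (toProd e)) 0 := by
  have hline : HasDerivAt (fun t : ℝ => toProd w + t • toProd e) (toProd e) 0 := by
    simpa using ((hasDerivAt_id (0 : ℝ)).smul_const (toProd e)).const_add (toProd w)
  have := h.comp_hasDerivAt_of_eq 0 hline (by simp)
  simpa [Function.comp_def, fProd, ← toProd_add_ofReal_mul] using this

lemma pdT_eq_of_hasFDerivAt (h : HasFDerivAt (fProd f) L (toProd w)) (e : Bicomplex) :
    pdT e f w = ofProd (L (toProd e)) := by
  have hφ := hasDerivAt_toProd_comp_line h e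
  ext
  · exact (hasFDerivAt_fst.comp_hasDerivAt 0 hφ).deriv
  · exact (hasFDerivAt_snd.comp_hasDerivAt 0 hφ).deriv

lemma complexifiedCR_and_dZ1_eq_iff (h : HasFDerivAt (fProd f) L (toProd w)) (d : Bicomplex) :
    ComplexifiedCR f w ∧ dZ1 f w = d ↔ L = mulCLM d := by
  simp only [complexifiedCR_and_dZ1_eq_iff_pdT, pdT_eq_of_hasFDerivAt h, ofProd_eq_iff]
  constructor
  · rintro ⟨h1, hi1, hi2, hjj⟩
    refine ext_basis ?_
    simp [h1, hi1, hi2, hjj]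
  · rintro rfl
    simp

lemma hasFDerivAt_of_tContDiffOn {U : Set Bicomplex} (hU : IsOpen U) (hf : TContDiffOn 1 f U)
    (hw : w ∈ U) : HasFDerivAt (fProd f) (fderiv ℝ (fProd f) (toProd w)) (toProd w) := by
  have hopen : IsOpen (toProd '' U) := by
    rw [Set.image_eq_preimage_of_inverse ofProd_toProd toProd_ofProd]
    exact hU.preimage (isInducing_toProd.continuous_iff.2 continuous_id')
  exact ((hf.differentiableOn one_ne_zero).differentiableAt
    (hopen.mem_nhds ⟨w, hw, rfl⟩)).hasFDerivAt

end RealDerivative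

section Forward

variable {f : Bicomplex → Bicomplex} {w d : Bicomplex} {L : (ℂ × ℂ) →L[ℝ] ℂ × ℂ}

lemma tendsto_add_ofReal_mul (w : Bicomplex) {e : Bicomplex} (he : IsUnit e) :
    Tendsto (fun t : ℝ => w + ofReal t * e) (𝓝[≠] 0) (𝓝[invertibleDiff w] w) := by
  refine tendsto_nhdsWithin_iff.2 ⟨?_, ?_⟩
  · rw [isInducing_toProd.tendsto_nhds_iff]
    have hcont : Continuous fun t : ℝ => toProd w + t • toProd e := by fun_prop
    simpa [Function.comp_def, toProd_add_ofReal_mul] using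
      (hcont.tendsto 0).mono_left nhdsWithin_le_nhds
  · filter_upwards [self_mem_nhdsWithin] with t ht
    rw [mem_invertibleDiff_iff, add_sub_cancel_left]
    exact (isUnit_ofReal ht).mul he

lemma HasTDerivAt.apply_eq_of_hasFDerivAt (hT : HasTDerivAt f d w)
    (hL : HasFDerivAt (fProd f) L (toProd w)) {e : Bicomplex} (he : IsUnit e) :
    L (toProd e) = toProd (d * e) := by
  have hquot : Tendsto (fun t : ℝ => toProd (e * ((f (w + ofReal t * e) - f w) / (ofReal t * e))))
      (𝓝[≠] 0) (𝓝 (toProd (d * e))) := by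
    have := ((mulCLM e).continuous.tendsto (toProd d)).comp
      (isInducing_toProd.tendsto_nhds_iff.1 (hT.comp (tendsto_add_ofReal_mul w he)))
    simpa [Function.comp_def, mul_comm e d] using this
  refine tendsto_nhds_unique (hasDerivAt_iff_tendsto_slope.1 (hasDerivAt_toProd_comp_line hL e))
    (hquot.congr' ?_)
  filter_upwards [self_mem_nhdsWithin] with t (ht : t ≠ 0)
  set q := (f (w + ofReal t * e) - f w) / (ofReal t * e)
  have hdiff : f (w + ofReal t * e) - f w = ofReal t * (e * q) := by
    rw [← mul_assoc, mul_div_cancel_of_isUnit _ ((isUnit_ofReal ht).mul he)]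
  rw [slope_def_module, ofReal_zero, zero_mul, add_zero, sub_zero, ← toProd_sub, hdiff,
    toProd_ofReal_mul, inv_smul_smul₀ ht]

lemma HasTDerivAt.eq_mulCLM_of_hasFDerivAt (hT : HasTDerivAt f d w)
    (hL : HasFDerivAt (fProd f) L (toProd w)) : L = mulCLM d := by
  have hunits : ∀ e ∈ ({1, i1, i2, jj} : Set Bicomplex), IsUnit e := by
    simp only [Set.mem_insert_iff, Set.mem_singleton_iff, forall_eq_or_imp, forall_eq]
    refine ⟨isUnit_one, ?_, ?_, ?_⟩ <;>
      exact isUnit_iff_sq_add_sq_ne_zero.2 (by simp [i1, i2, jj])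
  exact ext_basis fun e he => by simpa using hT.apply_eq_of_hasFDerivAt hL (hunits e he)

end Forward

section Converse

open ContinuousLinearMap

variable {f D : Bicomplex → Bicomplex} {w₀ : Bicomplex}

lemma hasFDerivAt_idem_conj {d w : Bicomplex} (h : HasFDerivAt (fProd f) (mulCLM d) (toProd w)) :
    HasFDerivAt (fun q => idem (f (idem.symm q))) (mul ℝ (ℂ × ℂ) (idem d)) (idem w) := by
  have h' : HasFDerivAt (fProd f) (mulCLM d) (idemCLE.symm (idem w)) := by simpa using h
  have hL : (idemCLE : (ℂ × ℂ) →L[ℝ] ℂ × ℂ).comp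
      ((mulCLM d).comp (idemCLE.symm : (ℂ × ℂ) →L[ℝ] ℂ × ℂ)) = mul ℝ (ℂ × ℂ) (idem d) :=
    ContinuousLinearMap.ext fun v => by simp
  rw [← hL]
  exact (idemCLE : (ℂ × ℂ) →L[ℝ] ℂ × ℂ).hasFDerivAt.comp (idem w)
    (h'.comp (idem w) idemCLE.symm.hasFDerivAt)

lemma eventually_hasFDerivAt_idem_conj
    (h : ∀ᶠ w in 𝓝 w₀, HasFDerivAt (fProd f) (mulCLM (D w)) (toProd w)) :
    ∀ᶠ q in 𝓝 (idem w₀), HasFDerivAt (fun q => idem (f (idem.symm q)))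
      (mul ℝ (ℂ × ℂ) (idem (D (idem.symm q)))) q := by
  have : Tendsto idem.symm (𝓝 (idem w₀)) (𝓝 w₀) := by
    simpa using continuous_idem_symm.tendsto (idem w₀)
  filter_upwards [this.eventually h] with q hq
  simpa using hasFDerivAt_idem_conj hq

lemma exists_hasDerivAt_eventuallyEq_comp_P1
    (h : ∀ᶠ w in 𝓝 w₀, HasFDerivAt (fProd f) (mulCLM (D w)) (toProd w)) :
    ∃ g : ℂ → ℂ, HasDerivAt g (P1 (D w₀)) (P1 w₀) ∧ (fun w => P1 (f w)) =ᶠ[𝓝 w₀] g ∘ P1 := by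
  have hG := eventually_hasFDerivAt_idem_conj h
  have hG₀ := hG.self_of_nhds
  simp only [RingEquiv.symm_apply_apply] at hG₀
  refine ⟨fun z => (idem (f (idem.symm (z, P2 w₀)))).1,
    (hasFDerivAt_fst.comp _ hG₀).hasDerivAt_comp_prodMk_left fun v => by simp, ?_⟩
  have hconst := eventually_eq_apply_fst_of_hasFDerivAt (hG.mono fun q hq =>
    ⟨hasFDerivAt_fst.comp q hq, fun y => by simp⟩)
  exact ((isInducing_idem.continuous.tendsto w₀).eventually hconst).mono fun w hw => by
    simpa using hw

lemma exists_hasDerivAt_eventuallyEq_comp_P2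
    (h : ∀ᶠ w in 𝓝 w₀, HasFDerivAt (fProd f) (mulCLM (D w)) (toProd w)) :
    ∃ g : ℂ → ℂ, HasDerivAt g (P2 (D w₀)) (P2 w₀) ∧ (fun w => P2 (f w)) =ᶠ[𝓝 w₀] g ∘ P2 := by
  have hG := eventually_hasFDerivAt_idem_conj h
  have hG₀ := hG.self_of_nhds
  simp only [RingEquiv.symm_apply_apply] at hG₀
  refine ⟨fun z => (idem (f (idem.symm (P1 w₀, z)))).2,
    (hasFDerivAt_snd.comp _ hG₀).hasDerivAt_comp_prodMk_right fun v => by simp, ?_⟩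
  have hconst := eventually_eq_apply_snd_of_hasFDerivAt (hG.mono fun q hq =>
    ⟨hasFDerivAt_snd.comp q hq, fun x => by simp⟩)
  exact ((isInducing_idem.continuous.tendsto w₀).eventually hconst).mono fun w hw => by
    simpa using hw

theorem hasTDerivAt_of_eventually_hasFDerivAt_mulCLM
    (h : ∀ᶠ w in 𝓝 w₀, HasFDerivAt (fProd f) (mulCLM (D w)) (toProd w)) :
    HasTDerivAt f (D w₀) w₀ := by
  obtain ⟨g₁, hg₁, he₁⟩ := exists_hasDerivAt_eventuallyEq_comp_P1 h
  obtain ⟨g₂, hg₂, he₂⟩ := exists_hasDerivAt_eventuallyEq_comp_P2 h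
  have hunit : ∀ᶠ w in 𝓝[invertibleDiff w₀] w₀, IsUnit (w - w₀) :=
    eventually_mem_nhdsWithin.mono fun w hw => mem_invertibleDiff_iff.1 hw
  have hne : ∀ᶠ w in 𝓝[invertibleDiff w₀] w₀, P1 w ≠ P1 w₀ ∧ P2 w ≠ P2 w₀ :=
    hunit.mono fun w hw => by
      simpa [sub_ne_zero] using isUnit_iff_P1_ne_zero_and_P2_ne_zero.1 hw
  rw [HasTDerivAt, isInducing_idem.tendsto_nhds_iff]
  refine (Tendsto.prodMk_nhds
    (tendsto_sub_div_sub_of_eventuallyEq_comp nhdsWithin_le_nhds continuous_P1.continuousAt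
      (hne.mono fun _ => And.left) he₁ hg₁)
    (tendsto_sub_div_sub_of_eventuallyEq_comp nhdsWithin_le_nhds continuous_P2.continuousAt
      (hne.mono fun _ => And.right) he₂ hg₂)).congr' ?_
  filter_upwards [hunit] with w hw
  simp [idem_div _ hw, Prod.ext_iff]

end Converse

end Bicomplex

open Bicomplex

/-- Characterization of `𝕋`-holomorphic `C¹` functions by the complexified
Cauchy–Riemann equations, with the formula for the derivative and the invertibility
criterion via the Jacobian determinant. -/
theorem tholomorphic_iff_complexified_CR (U : Set Bicomplex) (hU : IsOpen U)
    (f : Bicomplex → Bicomplex) (hf : TContDiffOn 1 f U) :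
    (THolomorphicOn f U ↔
      ∀ w ∈ U,
        dz1bar (s1 f) w = 0 ∧ dz2bar (s1 f) w = 0 ∧
        dz1bar (s2 f) w = 0 ∧ dz2bar (s2 f) w = 0 ∧
        dz1 (s1 f) w = dz2 (s2 f) w ∧ dz1 (s2 f) w = -dz2 (s1 f) w) ∧
    (THolomorphicOn f U →
      ∀ w ∈ U,
        HasTDerivAt f ⟨dz1 (s1 f) w, dz1 (s2 f) w⟩ w ∧
        (IsUnit (⟨dz1 (s1 f) w, dz1 (s2 f) w⟩ : Bicomplex) ↔
          dz1 (s1 f) w * dz2 (s2 f) w - dz1 (s2 f) w * dz2 (s1 f) w ≠ 0)) := by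
  have hderiv := fun w (hw : w ∈ U) => hasFDerivAt_of_tContDiffOn hU hf hw
  have hT : ∀ w ∈ U, ∀ d, HasTDerivAt f d w → ComplexifiedCR f w ∧ dZ1 f w = d :=
    fun w hw d hd => (complexifiedCR_and_dZ1_eq_iff (hderiv w hw) d).2
      (hd.eq_mulCLM_of_hasFDerivAt (hderiv w hw))
  have hCR : THolomorphicOn f U ↔ ∀ w ∈ U, ComplexifiedCR f w := by
    refine ⟨fun hol w hw => ?_, fun hcr w hw => ⟨dZ1 f w, ?_⟩⟩
    · obtain ⟨d, hd⟩ := hol w hw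
      exact (hT w hw d hd).1
    · refine hasTDerivAt_of_eventually_hasFDerivAt_mulCLM ?_
      filter_upwards [hU.mem_nhds hw] with v hv
      rw [← (complexifiedCR_and_dZ1_eq_iff (hderiv v hv) _).1 ⟨hcr v hv, rfl⟩]
      exact hderiv v hv
  refine ⟨hCR, fun hol w hw => ?_⟩
  obtain ⟨d, hd⟩ := hol w hw
  obtain ⟨⟨-, -, -, -, hCR₁, hCR₂⟩, rfl⟩ := hT w hw d hd
  have hJ : dz1 (s1 f) w * dz2 (s2 f) w - dz1 (s2 f) w * dz2 (s1 f) w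
      = dz1 (s1 f) w ^ 2 + dz1 (s2 f) w ^ 2 := by
    rw [← hCR₁, hCR₂]; ring
  exact ⟨hd, hJ ▸ isUnit_iff_sq_add_sq_ne_zero⟩
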